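/- arXiv:2006.13002 — 3 statements merged into one kernel-verified Lean document; each statement's English description precedes it below -/
import Mathlib

section
/- Two binary strings that are reverses of each other have the same autocorrelation polynomial, and hence the same expected wait time. -/
/-
Call `v` a `w`-avoider of length `m` if `w` does not occur in `v`. Reading strings backwards is a
bijection between `w`-avoiders and `w.reverse`-avoiders, so their numbers `A_w(m)` agree. A string
of length `m + 1` whose first `m` letters avoid `w` either avoids `w` or is a `w`-first-timer, so
the number of first-timers is `F_w(m + 1) = 2 A_w(m) - A_w(m + 1)`, and it is therefore
unchanged when `w` is reversed. The autocorrelation polynomial is unchanged because a suffix of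
`w` equals the prefix of the same length exactly when the same holds for `w.reverse`.
-/

/-- Extend a finite binary string (`true` = heads, `false` = tails) to an
infinite sequence by padding with `false`. -/
def padFalse {i : ℕ} (v : Fin i → Bool) : ℕ → Bool :=
  fun n => if h : n < i then v ⟨n, h⟩ else false

/-- The pattern `w` occurs in the flip sequence `s` (flip `m` is `s (m-1)`)
as a consecutive substring ending at flip `m`. -/
def OccursEndingAt (w : List Bool) (s : ℕ → Bool) (m : ℕ) : Prop :=
  w.length ≤ m ∧ ∀ j : Fin w.length, s (m - w.length + (j : ℕ)) = w.get j

/-- The first occurrence of `w` in `s` ends exactly at flip `m`. -/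
def FirstOccurEndsAt (w : List Bool) (s : ℕ → Bool) (m : ℕ) : Prop :=
  OccursEndingAt w s m ∧ ∀ k < m, ¬ OccursEndingAt w s k

/-- The number of binary strings of length `i` that end with `w` and contain
no other occurrence of `w` (`w`-first-timers of length `i`). -/
noncomputable def firstTimerCount (w : List Bool) (i : ℕ) : ℕ :=
  Nat.card {v : Fin i → Bool // FirstOccurEndsAt w (padFalse v) i}

/-- The probability that `w` first appears at exactly the `i`-th fair coin flip. -/
noncomputable def firstTimeProb (w : List Bool) (i : ℕ) : ℝ :=
  (firstTimerCount w i : ℝ) / 2 ^ i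

/-- The expected number of fair coin flips until `w` first appears. -/
noncomputable def expectedWaitTime (w : List Bool) : ℝ :=
  ∑' i : ℕ, (i : ℝ) * firstTimeProb w i

/-- The autocorrelation polynomial of `w`, evaluated at `z`:
`c_w(z) = ∑ c_i z^i`, where `c_i = 1` iff the suffix of `w` of length `n - i`
equals the prefix of `w` of length `n - i`. -/
noncomputable def autocorrPoly (w : List Bool) (z : ℝ) : ℝ :=
  ∑ i ∈ Finset.range w.length,
    if List.drop i w = List.take (w.length - i) w then z ^ i else 0

def Avoids (w : List Bool) (s : ℕ → Bool) (m : ℕ) : Prop :=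
  ∀ k ≤ m, ¬ OccursEndingAt w s k

noncomputable def avoiderCount (w : List Bool) (m : ℕ) : ℕ :=
  Nat.card {v : Fin m → Bool // Avoids w (padFalse v) m}

section Occurrences

variable {w : List Bool} {s t : ℕ → Bool} {k m : ℕ}

theorem occursEndingAt_congr (h : ∀ x < k, s x = t x) :
    OccursEndingAt w s k ↔ OccursEndingAt w t k := by
  refine and_congr_right fun hk => forall_congr' fun j => ?_
  rw [h _ (by omega)]

theorem avoids_congr (h : ∀ x < m, s x = t x) : Avoids w s m ↔ Avoids w t m :=
  forall₂_congr fun _ hk => not_congr (occursEndingAt_congr fun x hx => h x (by omega))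

theorem OccursEndingAt.reverse (hts : ∀ x < m, t x = s (m - 1 - x)) (hk : k ≤ m)
    (h : OccursEndingAt w s k) : OccursEndingAt w.reverse t (m - k + w.length) := by
  obtain ⟨hwk, hw⟩ := h
  refine ⟨by simp only [List.length_reverse]; omega, fun j => ?_⟩
  have hj : (j : ℕ) < w.length := by simpa using j.isLt
  have hwj := hw ⟨w.length - 1 - j, by omega⟩
  simp only [List.length_reverse, List.get_eq_getElem, List.getElem_reverse] at hwj ⊢
  rw [hts _ (by omega), ← hwj]
  congr 1
  omega

theorem Avoids.of_reverse (hts : ∀ x < m, t x = s (m - 1 - x)) (h : Avoids w.reverse t m) :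
    Avoids w s m := fun k hk hocc =>
  h _ (by have := hocc.1; omega) (hocc.reverse hts hk)

theorem avoids_reverse_iff (hts : ∀ x < m, t x = s (m - 1 - x)) :
    Avoids w.reverse t m ↔ Avoids w s m := by
  refine ⟨Avoids.of_reverse hts,
    fun h => Avoids.of_reverse (w := w.reverse) (s := t) (t := s) (fun x hx => ?_) ?_⟩
  · rw [hts _ (by omega)]
    congr 1
    omega
  · rwa [List.reverse_reverse]

theorem firstOccurEndsAt_zero_iff : FirstOccurEndsAt w s 0 ↔ w = [] := by
  simp only [FirstOccurEndsAt, OccursEndingAt, Nat.le_zero, List.length_eq_zero_iff,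
    Nat.not_lt_zero, IsEmpty.forall_iff, forall_const, and_true, and_iff_left_iff_imp]
  rintro rfl j
  exact j.elim0

theorem firstOccurEndsAt_succ_iff :
    FirstOccurEndsAt w s (m + 1) ↔ Avoids w s m ∧ OccursEndingAt w s (m + 1) := by
  simp only [FirstOccurEndsAt, Avoids, Nat.lt_succ_iff]
  exact and_comm

theorem avoids_succ_iff :
    Avoids w s (m + 1) ↔ Avoids w s m ∧ ¬ OccursEndingAt w s (m + 1) := by
  simp only [Avoids, Nat.le_succ_iff_eq_or_le, or_imp, forall_and, forall_eq]
  exact and_comm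

end Occurrences

theorem padFalse_init {m : ℕ} (v : Fin (m + 1) → Bool) :
    ∀ x < m, padFalse v x = padFalse (Fin.init v) x := by
  intro x hx
  simp [padFalse, Fin.init, hx, show x < m + 1 by omega]

theorem padFalse_comp_rev {m : ℕ} (v : Fin m → Bool) :
    ∀ x < m, padFalse v x = padFalse (v ∘ Fin.rev) (m - 1 - x) := by
  intro x hx
  simp only [padFalse, hx, show m - 1 - x < m by omega, dif_pos, Function.comp_apply]
  congr 1
  ext
  simp only [Fin.val_rev]
  omega

theorem card_subtype_init {α : Type*} {m : ℕ} (P : (Fin m → α) → Prop) :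
    Nat.card {v : Fin (m + 1) → α // P (Fin.init v)} = Nat.card {u // P u} * Nat.card α :=
  calc Nat.card {v : Fin (m + 1) → α // P (Fin.init v)}
      = Nat.card {p : (Fin m → α) × α // P p.1} :=
        Nat.card_congr (((Fin.snocEquiv _).symm.trans (Equiv.prodComm _ _)).subtypeEquiv
          fun _ => Iff.rfl)
    _ = Nat.card {u // P u} * Nat.card α := by
        rw [Nat.card_congr Equiv.prodSubtypeFstEquivSubtypeProd, Nat.card_prod]

theorem card_subtype_add_card_subtype_not {α : Type*} [Finite α] (P Q : α → Prop) :
    Nat.card {a // P a ∧ Q a} + Nat.card {a // P a ∧ ¬ Q a} = Nat.card {a // P a} := by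
  classical
  rw [← Nat.card_congr (Equiv.subtypeSubtypeEquivSubtypeInter P Q),
    ← Nat.card_congr (Equiv.subtypeSubtypeEquivSubtypeInter P (¬ Q ·)), ← Nat.card_sum,
    Nat.card_congr (Equiv.sumCompl fun a : {a // P a} => Q a)]

theorem avoiderCount_reverse (w : List Bool) (m : ℕ) :
    avoiderCount w.reverse m = avoiderCount w m :=
  Nat.card_congr <| (Fin.revPerm.arrowCongr (Equiv.refl Bool)).subtypeEquiv fun v =>
    avoids_reverse_iff (padFalse_comp_rev v)

theorem firstTimerCount_succ_add_avoiderCount_succ (w : List Bool) (m : ℕ) :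
    firstTimerCount w (m + 1) + avoiderCount w (m + 1) = 2 * avoiderCount w m :=
  calc firstTimerCount w (m + 1) + avoiderCount w (m + 1)
      = Nat.card {v : Fin (m + 1) → Bool // Avoids w (padFalse v) m} := by
        simp only [firstTimerCount, avoiderCount, firstOccurEndsAt_succ_iff, avoids_succ_iff]
        exact card_subtype_add_card_subtype_not _ _
    _ = Nat.card {v : Fin (m + 1) → Bool // Avoids w (padFalse (Fin.init v)) m} :=
        Nat.card_congr <| Equiv.subtypeEquivRight fun v => avoids_congr (padFalse_init v)
    _ = avoiderCount w m * Nat.card Bool := card_subtype_init (fun u => Avoids w (padFalse u) m)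
    _ = 2 * avoiderCount w m := by rw [Nat.card_eq_fintype_card, Fintype.card_bool, mul_comm]

theorem firstTimerCount_reverse (w : List Bool) (m : ℕ) :
    firstTimerCount w.reverse m = firstTimerCount w m := by
  cases m with
  | zero => simp [firstTimerCount, firstOccurEndsAt_zero_iff]
  | succ m =>
    have h := firstTimerCount_succ_add_avoiderCount_succ w m
    have hrev := firstTimerCount_succ_add_avoiderCount_succ w.reverse m
    rw [avoiderCount_reverse, avoiderCount_reverse] at hrev
    omega

theorem expectedWaitTime_reverse (w : List Bool) :
    expectedWaitTime w.reverse = expectedWaitTime w := by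
  simp only [expectedWaitTime, firstTimeProb, firstTimerCount_reverse]

theorem autocorrPoly_reverse_eq (w : List Bool) (z : ℝ) :
    autocorrPoly w.reverse z = autocorrPoly w z := by
  unfold autocorrPoly
  rw [List.length_reverse]
  refine Finset.sum_congr rfl fun i hi => if_congr ?_ rfl rfl
  rw [List.drop_reverse, List.take_reverse, Nat.sub_sub_self (Finset.mem_range.mp hi).le,
    List.reverse_inj, eq_comm]

/-- Two binary strings that are reverses of each other have the same
autocorrelation polynomial, and hence the same expected wait time. -/
theorem autocorrPoly_reverse (w : List Bool) :
    (∀ z : ℝ, autocorrPoly w.reverse z = autocorrPoly w z) ∧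
      expectedWaitTime w.reverse = expectedWaitTime w :=
  ⟨autocorrPoly_reverse_eq w, expectedWaitTime_reverse w⟩
end

section
/- In Penney's game with Alice playing HHH and Bob playing THH with a fair coin, Bob wins with probability 7/8. -/
/-- In Penney's game with Alice's string `A` and Bob's string `B`, the game is
decided for Bob at flip `m`: the first occurrence of `B` ends at flip `m` and
`A` has not occurred ending at any flip `k ≤ m`. -/
def BobWinsBy (A B : List Bool) (s : ℕ → Bool) (m : ℕ) : Prop :=
  FirstOccurEndsAt B s m ∧ ∀ k ≤ m, ¬ OccursEndingAt A s k

/-- The probability, over i.i.d. fair coin flips, that the second player's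
string `B` appears (as a consecutive substring) strictly before the first
player's string `A` does. -/
noncomputable def penneyWinProb (A B : List Bool) : ℝ :=
  ∑' m : ℕ, (Nat.card {v : Fin m → Bool // BobWinsBy A B (padFalse v) m} : ℝ) / 2 ^ m

/-!
Bob wins at flip `n + 4` exactly when the flips read `x w THH` with `w` a string of length `n`
without two consecutive heads: whatever precedes an `HH` completes a `THH` or an `HHH` before
flip `n + 4`. Splitting on the first letter shows that there are `fib (n + 2)` such strings `w`,
and the generating function `∑ fib n xⁿ = x / (1 - x - x²)` at `x = 1/2` sums the probabilities
of these wins to `3/4`. Together with the win `THH` at flip `3` this gives `1/8 + 3/4 = 7/8`.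
-/

open Real goldenRatio

theorem fib_le_goldenRatio_pow (n : ℕ) : (Nat.fib n : ℝ) ≤ φ ^ n := by
  have hφ : 1 ≤ φ := one_lt_goldenRatio.le
  cases n with
  | zero => simp
  | succ n =>
    -- `φ * fib (n + 1) ≤ φ * fib (n + 1) + fib n = φ ^ (n + 1)`
    have h := goldenRatio_mul_fib_succ_add_fib n
    have : (Nat.fib (n + 1) : ℝ) ≤ φ ^ n := by
      rw [pow_succ] at h
      nlinarith [goldenRatio_pos, (Nat.fib n).cast_nonneg (α := ℝ)]
    exact this.trans (pow_le_pow_right₀ hφ n.le_succ)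

theorem one_sub_sub_sq_pos_of_abs_lt_inv_goldenRatio {x : ℝ} (hx : |x| < φ⁻¹) :
    0 < 1 - x - x ^ 2 := by
  have hinv : φ⁻¹ = φ - 1 := by
    rw [inv_goldenRatio, goldenConj, goldenRatio]; ring
  have hφ := one_lt_goldenRatio
  have hsq := goldenRatio_sq
  rw [hinv, abs_lt] at hx
  nlinarith

theorem hasSum_fib_mul_pow {x : ℝ} (hx : |x| < φ⁻¹) :
    HasSum (fun n => (Nat.fib n : ℝ) * x ^ n) (x / (1 - x - x ^ 2)) := by
  have hgeom : |φ * x| < 1 := by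
    rw [abs_mul, abs_of_pos goldenRatio_pos]
    calc φ * |x| < φ * φ⁻¹ := by gcongr
      _ = 1 := mul_inv_cancel₀ goldenRatio_ne_zero
  have hsum : Summable (fun n => (Nat.fib n : ℝ) * x ^ n) := by
    refine (summable_geometric_of_abs_lt_one hgeom).abs.of_norm_bounded fun n => ?_
    rw [Real.norm_eq_abs, abs_mul, mul_pow, abs_mul, abs_pow, abs_pow, Nat.abs_cast,
      abs_of_pos goldenRatio_pos]
    gcongr
    exact fib_le_goldenRatio_pow n
  obtain ⟨S, hS⟩ := hsum
  -- The shifted series sums to `S - x` directly and to `x ^ 2 * S + x * S` by the recurrence.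
  have hshift := (hasSum_nat_add_iff' 2).2 hS
  have hrec : HasSum (fun n => (Nat.fib (n + 2) : ℝ) * x ^ (n + 2)) (x ^ 2 * S + x * S) := by
    have h1 := (hasSum_nat_add_iff' 1).2 hS
    simp only [Finset.range_one, Finset.sum_singleton, Nat.fib_zero, Nat.cast_zero, zero_mul,
      sub_zero] at h1
    refine ((hS.mul_left (x ^ 2)).add (h1.mul_left x)).congr_fun fun n => ?_
    rw [Nat.fib_add_two]
    push_cast
    ring
  have hS_eq : S - x = x ^ 2 * S + x * S := by
    simpa [Finset.sum_range_succ] using hshift.unique hrec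
  have hpos := one_sub_sub_sq_pos_of_abs_lt_inv_goldenRatio hx
  convert hS
  field_simp
  linarith

section PadFalse

variable {m : ℕ}

theorem padFalse_of_lt (v : Fin m → Bool) {i : ℕ} (h : i < m) : padFalse v i = v ⟨i, h⟩ :=
  dif_pos h

theorem padFalse_of_le (v : Fin m → Bool) {i : ℕ} (h : m ≤ i) : padFalse v i = false :=
  dif_neg (by omega)

@[simp]
theorem padFalse_cons_zero (a : Bool) (t : Fin m → Bool) :
    padFalse (Fin.cons a t : Fin (m + 1) → Bool) 0 = a :=
  padFalse_of_lt _ m.succ_pos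

@[simp]
theorem padFalse_cons_succ (a : Bool) (t : Fin m → Bool) (i : ℕ) :
    padFalse (Fin.cons a t : Fin (m + 1) → Bool) (i + 1) = padFalse t i := by
  by_cases h : i < m
  · rw [padFalse_of_lt _ (by omega), padFalse_of_lt _ h]
    exact Fin.cons_succ (α := fun _ => Bool) a t ⟨i, h⟩
  · rw [padFalse_of_le _ (by omega), padFalse_of_le _ (by omega)]

theorem padFalse_append_of_lt {n : ℕ} (u : Fin m → Bool) (w : Fin n → Bool) {i : ℕ}
    (h : i < m) :
    padFalse (Fin.append u w) i = padFalse u i := by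
  rw [padFalse_of_lt _ (by omega), padFalse_of_lt _ h]
  exact Fin.append_left u w ⟨i, h⟩

theorem padFalse_append_add {n : ℕ} (u : Fin m → Bool) (w : Fin n → Bool) (i : ℕ) :
    padFalse (Fin.append u w) (m + i) = padFalse w i := by
  by_cases h : i < n
  · rw [padFalse_of_lt _ (by omega), padFalse_of_lt _ h]
    exact Fin.append_right u w ⟨i, h⟩
  · rw [padFalse_of_le _ (by omega), padFalse_of_le _ (by omega)]

end PadFalse

theorem Fin.exists_eq_cons {α : Type*} {n : ℕ} (u : Fin (n + 1) → α) :
    ∃ a t, u = Fin.cons a t :=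
  ⟨u 0, Fin.tail u, (Fin.cons_self_tail u).symm⟩

def NoConsecutiveTrue (s : ℕ → Bool) (n : ℕ) : Prop :=
  ∀ i, i + 1 < n → s i = false ∨ s (i + 1) = false

section NoConsecutiveTrue

variable {s s' : ℕ → Bool} {n : ℕ}

theorem noConsecutiveTrue_congr (h : ∀ i < n, s i = s' i) :
    NoConsecutiveTrue s n ↔ NoConsecutiveTrue s' n := by
  refine forall_congr' fun i => imp_congr_right fun hi => ?_
  rw [h i (by omega), h (i + 1) hi]

theorem noConsecutiveTrue_succ_of_eq_false (h : s n = false) :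
    NoConsecutiveTrue s (n + 1) ↔ NoConsecutiveTrue s n := by
  refine forall_congr' fun i => ⟨fun hs hi => hs (by omega), fun hs hi => ?_⟩
  rcases Nat.lt_or_ge (i + 1) n with hi' | hi'
  · exact hs hi'
  · exact Or.inr (by rwa [show i + 1 = n by omega])

theorem noConsecutiveTrue_padFalse_cons (a : Bool) (t : Fin n → Bool) :
    NoConsecutiveTrue (padFalse (Fin.cons a t : Fin (n + 1) → Bool)) (n + 1) ↔
      (a = false ∨ padFalse t 0 = false) ∧ NoConsecutiveTrue (padFalse t) n := by
  constructor
  · intro h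
    refine ⟨?_, fun i hi => ?_⟩
    · rcases Nat.eq_zero_or_pos n with rfl | hn
      · exact Or.inr (padFalse_of_le t le_rfl)
      · simpa using h 0 (by omega)
    · simpa using h (i + 1) (by omega)
  · rintro ⟨h0, h⟩ (_ | i) hi
    · simpa using h0
    · simpa using h i (by omega)

end NoConsecutiveTrue

theorem card_noConsecutiveTrue_add_two (n : ℕ) :
    Nat.card {u : Fin (n + 2) → Bool // NoConsecutiveTrue (padFalse u) (n + 2)} =
      Nat.card {u : Fin (n + 1) → Bool // NoConsecutiveTrue (padFalse u) (n + 1)} +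
        Nat.card {u : Fin n → Bool // NoConsecutiveTrue (padFalse u) n} := by
  have hcons := @noConsecutiveTrue_padFalse_cons
  -- A string either starts with `false`, or with `true` followed by `false`.
  let f : {t : Fin (n + 1) → Bool // NoConsecutiveTrue (padFalse t) (n + 1)} ⊕
      {t : Fin n → Bool // NoConsecutiveTrue (padFalse t) n} →
      {u : Fin (n + 2) → Bool // NoConsecutiveTrue (padFalse u) (n + 2)} :=
    Sum.elim (fun t => ⟨Fin.cons false t.1, (hcons _ _).2 ⟨.inl rfl, t.2⟩⟩)
      (fun t => ⟨Fin.cons true (Fin.cons false t.1),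
        (hcons _ _).2 ⟨.inr (by simp), (hcons _ _).2 ⟨.inl rfl, t.2⟩⟩⟩)
  have hf : Function.Bijective f := by
    refine ⟨?_, fun ⟨u, hu⟩ => ?_⟩
    · rintro (⟨t, _⟩ | ⟨t, _⟩) (⟨t', _⟩ | ⟨t', _⟩) h <;>
        simp_all [f, Fin.cons_inj]
    · obtain ⟨a, t, rfl⟩ := Fin.exists_eq_cons u
      obtain ⟨h0, ht⟩ := (hcons _ _).1 hu
      cases a
      · exact ⟨.inl ⟨t, ht⟩, rfl⟩
      · obtain ⟨b, t', rfl⟩ := Fin.exists_eq_cons t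
        obtain ⟨-, ht'⟩ := (hcons _ _).1 ht
        obtain rfl : b = false := by simpa using h0
        exact ⟨.inr ⟨t', ht'⟩, rfl⟩
  rw [← Nat.card_eq_of_bijective f hf, Nat.card_sum]

theorem card_noConsecutiveTrue (n : ℕ) :
    Nat.card {u : Fin n → Bool // NoConsecutiveTrue (padFalse u) n} = Nat.fib (n + 2) := by
  have card_of_le_one {k : ℕ} (hk : k ≤ 1) :
      Nat.card {u : Fin k → Bool // NoConsecutiveTrue (padFalse u) k} = 2 ^ k := by
    have hall (u : Fin k → Bool) : NoConsecutiveTrue (padFalse u) k := fun i hi => by omega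
    rw [Nat.card_congr (Equiv.subtypeUnivEquiv hall)]
    simp
  induction n using Nat.twoStepInduction with
  | zero => exact card_of_le_one zero_le_one
  | one => exact card_of_le_one le_rfl
  | more n ih ih' =>
    rw [card_noConsecutiveTrue_add_two, ih, ih', add_comm]
    exact Nat.fib_add_two.symm

theorem occursEndingAt_iff_exists (w : List Bool) (s : ℕ → Bool) (k : ℕ) :
    OccursEndingAt w s k ↔
      ∃ i, k = i + w.length ∧ ∀ j : Fin w.length, s (i + j) = w.get j := by
  constructor
  · rintro ⟨hk, h⟩
    exact ⟨k - w.length, by omega, h⟩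
  · rintro ⟨i, rfl, h⟩
    exact ⟨by omega, by simpa using h⟩

theorem occursEndingAt_triple_iff (a b c : Bool) (s : ℕ → Bool) (k : ℕ) :
    OccursEndingAt [a, b, c] s k ↔
      ∃ i, k = i + 3 ∧ s i = a ∧ s (i + 1) = b ∧ s (i + 2) = c := by
  simp [occursEndingAt_iff_exists, Fin.forall_fin_succ]

theorem bobWinsBy_HHH_THH_iff (s : ℕ → Bool) (n : ℕ) :
    BobWinsBy [true, true, true] [false, true, true] s (n + 3) ↔
      s n = false ∧ s (n + 1) = true ∧ s (n + 2) = true ∧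
        NoConsecutiveTrue (fun i => s (i + 1)) n := by
  simp only [BobWinsBy, FirstOccurEndsAt, occursEndingAt_triple_iff]
  constructor
  · rintro ⟨⟨⟨i, hi, h0, h1, h2⟩, hTHH⟩, hHHH⟩
    obtain rfl : i = n := by omega
    refine ⟨h0, h1, h2, fun j hj => ?_⟩
    -- Whatever precedes an earlier `HH`, it completes a `THH` or an `HHH`.
    by_contra! hHH
    simp only [ne_eq, Bool.not_eq_false] at hHH
    cases hj : s j
    · exact hTHH (j + 3) (by omega) ⟨j, rfl, hj, hHH⟩
    · exact hHHH (j + 3) (by omega) ⟨j, rfl, hj, hHH⟩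
  · rintro ⟨h0, h1, h2, hmid⟩
    have hpair : ∀ j < n, s (j + 1) = false ∨ s (j + 2) = false := by
      intro j hj
      rcases Nat.lt_or_ge (j + 1) n with hj' | hj'
      · exact hmid j hj'
      · exact .inl (by rwa [show j + 1 = n by omega])
    refine ⟨⟨⟨n, rfl, h0, h1, h2⟩, ?_⟩, ?_⟩
    · rintro k hk ⟨i, rfl, -, hi1, hi2⟩
      rcases hpair i (by omega) with h | h <;> simp_all
    · rintro k hk ⟨i, rfl, hi0, hi1, hi2⟩
      rcases Nat.lt_or_ge i n with hi | hi
      · rcases hpair i hi with h | h <;> simp_all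
      · obtain rfl : i = n := by omega
        simp_all

theorem card_bobWinsBy_of_lt_length (A B : List Bool) {m : ℕ} (hm : m < B.length) :
    Nat.card {v : Fin m → Bool // BobWinsBy A B (padFalse v) m} = 0 := by
  have : IsEmpty {v : Fin m → Bool // BobWinsBy A B (padFalse v) m} :=
    ⟨fun v => absurd v.2.1.1.1 hm.not_ge⟩
  exact Nat.card_of_isEmpty

theorem card_bobWinsBy_HHH_THH_three :
    Nat.card {v : Fin 3 → Bool //
      BobWinsBy [true, true, true] [false, true, true] (padFalse v) 3} = 1 := by
  have hiff (v : Fin 3 → Bool) :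
      BobWinsBy [true, true, true] [false, true, true] (padFalse v) 3 ↔
        v = ![false, true, true] := by
    rw [bobWinsBy_HHH_THH_iff (n := 0)]
    simp [padFalse_of_lt, NoConsecutiveTrue, funext_iff, Fin.forall_fin_succ]
  rw [Nat.card_congr (Equiv.subtypeEquivRight hiff)]
  exact Nat.card_unique

theorem bobWinsBy_HHH_THH_cons_append_iff {n : ℕ} (b : Bool) (w : Fin n → Bool)
    (t : Fin 3 → Bool) :
    BobWinsBy [true, true, true] [false, true, true]
        (padFalse (Fin.cons b (Fin.append w t) : Fin (n + 4) → Bool)) (n + 4) ↔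
      NoConsecutiveTrue (padFalse w) n ∧ t = ![false, true, true] := by
  rw [bobWinsBy_HHH_THH_iff]
  simp only [padFalse_cons_succ]
  have h0 : padFalse (Fin.append w t) n = t 0 :=
    (padFalse_append_add w t 0).trans (padFalse_of_lt t (by norm_num))
  have h1 : padFalse (Fin.append w t) (n + 1) = t 1 :=
    (padFalse_append_add w t 1).trans (padFalse_of_lt t (by norm_num))
  have h2 : padFalse (Fin.append w t) (n + 2) = t 2 :=
    (padFalse_append_add w t 2).trans (padFalse_of_lt t (by norm_num))
  have hmid (ht0 : t 0 = false) : NoConsecutiveTrue (padFalse (Fin.append w t)) (n + 1) ↔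
      NoConsecutiveTrue (padFalse w) n :=
    (noConsecutiveTrue_succ_of_eq_false (h0.trans ht0)).trans
      (noConsecutiveTrue_congr fun i hi => padFalse_append_of_lt w t hi)
  have ht : t = ![false, true, true] ↔ t 0 = false ∧ t 1 = true ∧ t 2 = true := by
    simp [funext_iff, Fin.forall_fin_succ]
  rw [ht, h0, h1, h2]
  constructor
  · rintro ⟨ht0, ht1, ht2, h⟩
    exact ⟨(hmid ht0).1 h, ht0, ht1, ht2⟩
  · rintro ⟨h, ht0, ht1, ht2⟩
    exact ⟨ht0, ht1, ht2, (hmid ht0).2 h⟩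

theorem card_bobWinsBy_HHH_THH_add_four (n : ℕ) :
    Nat.card {v : Fin (n + 4) → Bool //
      BobWinsBy [true, true, true] [false, true, true] (padFalse v) (n + 4)} =
        2 * Nat.fib (n + 2) := by
  have hiff := @bobWinsBy_HHH_THH_cons_append_iff n
  let f : Bool × {w : Fin n → Bool // NoConsecutiveTrue (padFalse w) n} →
      {v : Fin (n + 4) → Bool //
        BobWinsBy [true, true, true] [false, true, true] (padFalse v) (n + 4)} :=
    fun p => ⟨Fin.cons p.1 (Fin.append p.2.1 ![false, true, true]),
      (hiff _ _ _).2 ⟨p.2.2, rfl⟩⟩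
  have hf : Function.Bijective f := by
    refine ⟨fun p q h => ?_, fun ⟨v, hv⟩ => ?_⟩
    · simp only [f, Subtype.mk.injEq, Fin.cons_inj] at h
      refine Prod.ext h.1 (Subtype.ext (funext fun i => ?_))
      simpa using congrFun h.2 (Fin.castAdd 3 i)
    · obtain ⟨b, r, rfl⟩ := Fin.exists_eq_cons v
      obtain ⟨⟨w, t⟩, rfl⟩ := (Fin.appendEquiv n 3).surjective r
      obtain ⟨hw, rfl⟩ := (hiff b w t).1 hv
      exact ⟨(b, ⟨w, hw⟩), rfl⟩
  rw [← Nat.card_eq_of_bijective f hf, Nat.card_prod, card_noConsecutiveTrue,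
    Nat.card_eq_fintype_card, Fintype.card_bool]

/-- In Penney's game with Alice playing HHH and Bob playing THH with a fair
coin, Bob wins with probability 7/8. -/
theorem penney_HHH_vs_THH :
    penneyWinProb [true, true, true] [false, true, true] = 7 / 8 := by
  have hx : |(1 / 2 : ℝ)| < φ⁻¹ := by
    rw [abs_of_pos (by norm_num), lt_inv_comm₀ (by norm_num) goldenRatio_pos]
    linarith [goldenRatio_lt_two]
  have hfib := (hasSum_nat_add_iff' 2).2 (hasSum_fib_mul_pow hx)
  norm_num [Finset.sum_range_succ] at hfib
  refine ((hasSum_nat_add_iff' 4).1 ?_).tsum_eq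
  norm_num [Finset.sum_range_succ, card_bobWinsBy_of_lt_length, card_bobWinsBy_HHH_THH_three]
  rw [show (3 / 4 : ℝ) = 1 / 2 * (3 / 2) by norm_num]
  refine (hfib.mul_left (1 / 2)).congr_fun fun n => ?_
  rw [card_bobWinsBy_HHH_THH_add_four, one_div, inv_pow]
  push_cast
  field_simp
  ring
end

section
/- In the Two-Coin game where both players choose the pattern HT, a tie occurs with probability 5/27, and each player wins with probability 11/27. -/
/-
A word ending in HT with no earlier HT cannot have a tail after a head before its last letter, so
it is `T^a H^(i-1-a) T` with `a < i - 1`. Hence there are `i - 1` such words of length `i`,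
`p i = (i-1)/2^i` and `1 - ∑_{k ≤ i} p k = (i+1)/2^i`. Substituting `i = n + 2`, both
probabilities become `(1/16) ∑ q(n) 4^{-n}` with `q = (n+1)^2` resp. `(n+1)(n+3)`, which follow
from `∑ (n+1) r^n = 1/(1-r)^2` and `∑ (n+1)^2 r^n = (1+r)/(1-r)^3` at `r = 1/4`.
-/

local notation "HT" => [true, false]

section Series

variable {𝕜 : Type*} [NormedField 𝕜] {r : 𝕜}

theorem hasSum_succ_mul_geometric_of_norm_lt_one (hr : ‖r‖ < 1) :
    HasSum (fun n : ℕ ↦ ((n : 𝕜) + 1) * r ^ n) (1 / (1 - r) ^ 2) := by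
  simpa using hasSum_choose_mul_geometric_of_norm_lt_one 1 hr

theorem hasSum_succ_sq_mul_geometric_of_norm_lt_one (hr : ‖r‖ < 1) :
    HasSum (fun n : ℕ ↦ ((n : 𝕜) + 1) ^ 2 * r ^ n) ((1 + r) / (1 - r) ^ 3) := by
  have hr1 : 1 - r ≠ 0 := sub_ne_zero.2 (ne_of_apply_ne norm (by simpa using hr.ne'))
  have hsum : 2 * (1 / (1 - r) ^ 3) - 1 / (1 - r) ^ 2 = (1 + r) / (1 - r) ^ 3 := by
    field_simp
    ring
  rw [← hsum]
  refine (((hasSum_choose_mul_geometric_of_norm_lt_one 2 hr).mul_left 2).sub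
    (hasSum_succ_mul_geometric_of_norm_lt_one hr)).congr_fun fun n ↦ ?_
  -- cast from `ℕ`, as `𝕜` may have characteristic 2
  have hchoose := congrArg (Nat.cast : ℕ → 𝕜) (Nat.add_one_mul_choose_eq (n + 1) 1)
  push_cast [Nat.choose_one_right] at hchoose
  linear_combination r ^ n * hchoose

end Series

theorem occursEndingAt_HT_iff (s : ℕ → Bool) (m : ℕ) :
    OccursEndingAt HT s m ↔ 2 ≤ m ∧ s (m - 2) = true ∧ s (m - 1) = false := by
  simp only [OccursEndingAt, List.length_cons, List.length_nil, Nat.reduceAdd, Fin.forall_fin_two]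
  refine ⟨fun ⟨hm, h0, h1⟩ ↦ ⟨hm, ?_, ?_⟩, fun ⟨hm, h0, h1⟩ ↦ ⟨hm, ?_, ?_⟩⟩ <;>
    simp_all [show m - 2 + 1 = m - 1 by omega]

/-- The word `T^a H^(i-1-a) T` (heads = `true`). -/
def htFirstTimer (i a : ℕ) : Fin i → Bool := fun n ↦ decide (a ≤ n ∧ (n : ℕ) < i - 1)

theorem padFalse_htFirstTimer (i a n : ℕ) :
    padFalse (htFirstTimer i a) n = decide (a ≤ n ∧ n < i - 1) := by
  unfold padFalse htFirstTimer
  split_ifs with hn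
  · rfl
  · simp only [false_eq_decide_iff, not_and]
    omega

theorem htFirstTimer_injective (i : ℕ) :
    Function.Injective (fun a : Fin (i - 1) ↦ htFirstTimer i a) := by
  intro a b hab
  have ha := congrFun hab ⟨a, by omega⟩
  have hb := congrFun hab ⟨b, by omega⟩
  simp only [htFirstTimer, decide_eq_decide] at ha hb
  omega

theorem firstOccurEndsAt_htFirstTimer {i a : ℕ} (ha : a < i - 1) :
    FirstOccurEndsAt HT (padFalse (htFirstTimer i a)) i := by
  simp only [FirstOccurEndsAt, occursEndingAt_HT_iff, padFalse_htFirstTimer, decide_eq_true_iff,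
    decide_eq_false_iff_not]
  refine ⟨by omega, fun k _ ⟨_, _, hT⟩ ↦ hT ⟨by omega, by omega⟩⟩

theorem exists_eq_decide_le_of_true_imp_succ {u : ℕ → Bool} {m : ℕ}
    (hstep : ∀ n < m, u n = true → u (n + 1) = true) (hm : u m = true) :
    ∃ a ≤ m, ∀ n ≤ m, u n = decide (a ≤ n) := by
  have hex : ∃ n, u n = true := ⟨m, hm⟩
  refine ⟨Nat.find hex, Nat.find_min' hex hm, fun n hn ↦ ?_⟩
  rcases lt_or_ge n (Nat.find hex) with hlt | hge
  · simpa [hlt.not_ge] using Nat.find_min hex hlt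
  · rw [decide_eq_true hge]
    induction n, hge using Nat.le_induction with
    | base => exact Nat.find_spec hex
    | succ n _ ih => exact hstep n (by omega) (ih (by omega))

theorem exists_htFirstTimer_eq_of_firstOccurEndsAt {i : ℕ} {v : Fin i → Bool}
    (hv : FirstOccurEndsAt HT (padFalse v) i) : ∃ a < i - 1, htFirstTimer i a = v := by
  obtain ⟨hocc, hfirst⟩ := hv
  obtain ⟨hi, hH, hT⟩ := (occursEndingAt_HT_iff _ _).1 hocc
  -- an earlier `HT` would end at flip `n + 2 < i`
  have hstep : ∀ n < i - 2, padFalse v n = true → padFalse v (n + 1) = true := fun n hn hvn ↦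
    Bool.not_eq_false _ ▸ fun hvn' ↦
      hfirst (n + 2) (by omega) ((occursEndingAt_HT_iff _ _).2 ⟨by omega, hvn, hvn'⟩)
  obtain ⟨a, ha, hvStep⟩ := exists_eq_decide_le_of_true_imp_succ hstep hH
  refine ⟨a, by omega, funext fun n ↦ ?_⟩
  have hvn : v n = padFalse v n := by simp [padFalse]
  rw [hvn]
  rcases le_or_gt (n : ℕ) (i - 2) with hn | hn
  · rw [hvStep n hn, htFirstTimer]
    congr 1
    simp only [eq_iff_iff, and_iff_left_iff_imp]
    omega
  · rw [htFirstTimer, show (n : ℕ) = i - 1 by omega, hT]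
    exact decide_eq_false (by omega)

theorem firstOccurEndsAt_HT_iff {i : ℕ} (v : Fin i → Bool) :
    FirstOccurEndsAt HT (padFalse v) i ↔ v ∈ Set.range (fun a : Fin (i - 1) ↦ htFirstTimer i a) :=
  ⟨fun hv ↦ let ⟨a, ha, hav⟩ := exists_htFirstTimer_eq_of_firstOccurEndsAt hv; ⟨⟨a, ha⟩, hav⟩,
    fun ⟨a, hav⟩ ↦ hav ▸ firstOccurEndsAt_htFirstTimer a.2⟩

theorem firstTimerCount_HT (i : ℕ) : firstTimerCount HT i = i - 1 := by
  simp_rw [firstTimerCount, firstOccurEndsAt_HT_iff]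
  rw [Nat.card_coe_set_eq, Set.ncard_range_of_injective (htFirstTimer_injective i),
    Nat.card_eq_fintype_card, Fintype.card_fin]

theorem firstTimeProb_HT (i : ℕ) : firstTimeProb HT i = ((i - 1 : ℕ) : ℝ) / 2 ^ i := by
  rw [firstTimeProb, firstTimerCount_HT]

theorem firstTimeProb_HT_add_two (n : ℕ) :
    firstTimeProb HT (n + 2) = ((n : ℝ) + 1) / 2 ^ (n + 2) := by
  rw [firstTimeProb_HT, show n + 2 - 1 = n + 1 from rfl]
  push_cast
  ring

theorem one_sub_sum_firstTimeProb_HT (i : ℕ) :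
    1 - ∑ k ∈ Finset.range (i + 1), firstTimeProb HT k = ((i : ℝ) + 1) / 2 ^ i := by
  induction i with
  | zero => simp [firstTimeProb_HT]
  | succ i ih =>
    rw [Finset.sum_range_succ, sub_add_eq_sub_sub, ih, firstTimeProb_HT, Nat.add_sub_cancel,
      pow_succ]
    push_cast
    field_simp
    ring

theorem hasSum_of_hasSum_nat_add_two {G : Type*} [AddCommGroup G] [TopologicalSpace G]
    [IsTopologicalAddGroup G] {f : ℕ → G} {a : G} (h0 : f 0 = 0) (h1 : f 1 = 0)
    (h : HasSum (fun n ↦ f (n + 2)) a) : HasSum f a :=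
  (hasSum_nat_add_iff' 2).1 (by simpa [Finset.sum_range_succ, h0, h1] using h)

/-- In the Two-Coin game where both players choose the pattern HT (each flipping
their own independent fair coin), a tie occurs with probability 5/27, and each
player wins with probability 11/27.  Here `p i = firstTimeProb [H,T] i` is the
probability that HT first appears at flip `i`; a tie has probability
`∑ pᵢ pᵢ` and each player wins with probability `∑ pᵢ (1 - ∑_{k ≤ i} p_k)`. -/
theorem twoCoin_HT_probs :
    (∑' i : ℕ, firstTimeProb [true, false] i * firstTimeProb [true, false] i) = 5 / 27 ∧
      (∑' i : ℕ, firstTimeProb [true, false] i *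
        (1 - ∑ k ∈ Finset.range (i + 1), firstTimeProb [true, false] k)) = 11 / 27 := by
  have hr : ‖(1 / 4 : ℝ)‖ < 1 := by norm_num
  have hlin := hasSum_succ_mul_geometric_of_norm_lt_one hr
  have hsq := hasSum_succ_sq_mul_geometric_of_norm_lt_one hr
  have hquarter (n : ℕ) : (1 / 4 : ℝ) ^ n = 1 / (2 ^ n) ^ 2 := by
    rw [← pow_mul, mul_comm, pow_mul, one_div_pow]
    norm_num
  simp_rw [one_sub_sum_firstTimeProb_HT]
  refine ⟨HasSum.tsum_eq ?_, HasSum.tsum_eq ?_⟩ <;>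
    refine hasSum_of_hasSum_nat_add_two (by simp [firstTimeProb_HT])
      (by simp [firstTimeProb_HT]) ?_
  · rw [show (5 / 27 : ℝ) = 1 / 16 * ((1 + 1 / 4) / (1 - 1 / 4) ^ 3) by norm_num]
    refine (hsq.mul_left _).congr_fun fun n ↦ ?_
    rw [firstTimeProb_HT_add_two, hquarter]
    field_simp
    ring
  · rw [show (11 / 27 : ℝ) = 1 / 16 * ((1 + 1 / 4) / (1 - 1 / 4) ^ 3 + 2 * (1 / (1 - 1 / 4) ^ 2))
      by norm_num]
    refine ((hsq.add (hlin.mul_left 2)).mul_left _).congr_fun fun n ↦ ?_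
    rw [firstTimeProb_HT_add_two, hquarter]
    push_cast
    field_simp
    ring
end
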